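/- Let c : ℕ → ℕ satisfy c(i) ≥ 4 for all i ≥ 1, define 𝓢_0 = 0, 𝓢_1 = 1, and 𝓢_{n+1} = (1 + q + ⋯ + q^{c(n+1)−1})·𝓢_n − q^{c(n)−1}·𝓢_{n−1} for n ≥ 1, and fix n ≥ 1. If for every complex number q with |q| = R_* one has |𝓢_{n−1}(q)| < R_*^{-1}·|𝓢_n(q)|, then for every complex number q with |q| = R_* one has |𝓢_{n+1}(q)| > R_*·|𝓢_n(q)|. -/
import Mathlib


open Polynomial

/-- `R_* = (3 − √5)/2`. -/
noncomputable def Rstar : ℝ := (3 - Real.sqrt 5) / 2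

theorem denominators_induction_step
    (c : ℕ → ℕ) (hc : ∀ i : ℕ, 1 ≤ i → 4 ≤ c i)
    (S : ℕ → Polynomial ℤ) (hS0 : S 0 = 0) (hS1 : S 1 = 1)
    (hSrec : ∀ n : ℕ, 1 ≤ n →
      S (n + 1) = (∑ i ∈ Finset.range (c (n + 1)), X ^ i) * S n -
        X ^ (c n - 1) * S (n - 1))
    (n : ℕ) (hn : 1 ≤ n)
    (h : ∀ q : ℂ, ‖q‖ = Rstar →
      ‖aeval q (S (n - 1))‖ < Rstar⁻¹ * ‖aeval q (S n)‖) :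
    ∀ q : ℂ, ‖q‖ = Rstar → ‖aeval q (S (n + 1))‖ > Rstar * ‖aeval q (S n)‖ := by
  intro q hq
  have hs : Real.sqrt 5 ^ 2 = 5 := Real.sq_sqrt (by norm_num)
  have hs2 : 2 < Real.sqrt 5 := by nlinarith [Real.sqrt_nonneg 5]
  have hs3 : Real.sqrt 5 < 3 := by nlinarith [Real.sqrt_nonneg 5]
  have hrval : Rstar = (3 - Real.sqrt 5) / 2 := rfl
  have hr0 : 0 < Rstar := by rw [hrval]; linarith
  have hr1 : Rstar < 1 := by rw [hrval]; linarith
  have hm : 4 ≤ c (n + 1) := hc (n + 1) (by omega)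
  have hk : 4 ≤ c n := hc n hn
  have heval : aeval q (S (n + 1)) =
      (∑ i ∈ Finset.range (c (n + 1)), q ^ i) * aeval q (S n) -
        q ^ (c n - 1) * aeval q (S (n - 1)) := by
    rw [hSrec n hn]
    simp [map_sub, map_mul, map_pow, map_sum]
  set A := ∑ i ∈ Finset.range (c (n + 1)), q ^ i with hAdef
  set a := ‖aeval q (S n)‖ with hadef
  set b := ‖aeval q (S (n - 1))‖ with hbdef
  have hb : b < Rstar⁻¹ * a := h q hq
  have ha0 : 0 ≤ a := norm_nonneg _
  have hb0 : 0 ≤ b := norm_nonneg _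
  have hrm : Rstar ^ c (n + 1) ≤ Rstar ^ 4 :=
    pow_le_pow_of_le_one hr0.le hr1.le hm
  have hrk : Rstar ^ (c n - 1) ≤ Rstar ^ 3 :=
    pow_le_pow_of_le_one hr0.le hr1.le (by omega)
  -- lower bound on ‖A‖
  have hgeom : A * (q - 1) = q ^ c (n + 1) - 1 := geom_sum_mul q _
  have hnorm1 : ‖A‖ * ‖q - 1‖ = ‖q ^ c (n + 1) - 1‖ := by
    rw [← norm_mul, hgeom]
  have h2 : ‖q - 1‖ ≤ Rstar + 1 := by
    calc ‖q - 1‖ ≤ ‖q‖ + ‖(1 : ℂ)‖ := norm_sub_le _ _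
      _ = Rstar + 1 := by rw [hq]; norm_num
  have h3 : 1 - Rstar ^ 4 ≤ ‖q ^ c (n + 1) - 1‖ := by
    have h4 : ‖(1 : ℂ)‖ - ‖q ^ c (n + 1)‖ ≤ ‖1 - q ^ c (n + 1)‖ :=
      norm_sub_norm_le _ _
    rw [norm_sub_rev] at h4
    have h5 : ‖q ^ c (n + 1)‖ = Rstar ^ c (n + 1) := by rw [norm_pow, hq]
    rw [h5, norm_one] at h4
    linarith
  have hkey : (Rstar + Rstar ^ 2) * (1 + Rstar) ≤ 1 - Rstar ^ 4 := by
    rw [hrval]; nlinarith [hs, hs2, hs3]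
  have hAn : Rstar + Rstar ^ 2 ≤ ‖A‖ := by
    have hA0 : 0 ≤ ‖A‖ := norm_nonneg _
    have h6 : ‖A‖ * ‖q - 1‖ ≤ ‖A‖ * (Rstar + 1) :=
      mul_le_mul_of_nonneg_left h2 hA0
    nlinarith [hnorm1, h3, hkey, h6, hr0]
  -- lower bound on ‖S (n+1)‖
  have hfin : ‖A‖ * a - Rstar ^ (c n - 1) * b ≤ ‖aeval q (S (n + 1))‖ := by
    rw [heval]
    have := norm_sub_norm_le (A * aeval q (S n)) (q ^ (c n - 1) * aeval q (S (n - 1)))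
    have e1 : ‖A * aeval q (S n)‖ = ‖A‖ * a := by rw [norm_mul]
    have e2 : ‖q ^ (c n - 1) * aeval q (S (n - 1))‖ = Rstar ^ (c n - 1) * b := by
      rw [norm_mul, norm_pow, hq]
    linarith
  have hb' : Rstar * b < a := by
    rw [inv_mul_eq_div, lt_div_iff₀ hr0] at hb
    linarith [hb]
  have p1 : Rstar ^ (c n - 1) * b ≤ Rstar ^ 3 * b :=
    mul_le_mul_of_nonneg_right hrk hb0
  have p2 : Rstar ^ 2 * (Rstar * b) < Rstar ^ 2 * a :=
    mul_lt_mul_of_pos_left hb' (by positivity)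
  have p3 : (Rstar + Rstar ^ 2) * a ≤ ‖A‖ * a :=
    mul_le_mul_of_nonneg_right hAn ha0
  nlinarith [hfin, p1, p2, p3]
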